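/- Let L(z) = M_T(z/2)·M_V(z)·M_T(z/2) be the leapfrog matrix for the harmonic oscillator and let α = 1/2 + (√3/6)·i. Then the two-stage symmetric-conjugate composition Ψ(h) = L(α h)·L(conj(α) h) satisfies: (fun h : ℝ => Ψ(h) − M_H(h)) is O(h⁴) as h → 0, i.e. the composition S_{αh} ∘ S_{ᾱh} is a method of order 3. -/

import Mathlib

open Matrix Asymptotics Filter

attribute [local instance] Matrix.normedAddCommGroup Matrix.normedSpace

/-- Exact evolution matrix of the harmonic oscillator `q' = p`, `p' = -q`. -/
noncomputable def MH (z : ℂ) : Matrix (Fin 2) (Fin 2) ℂ :=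
  !![Complex.cos z, Complex.sin z; -Complex.sin z, Complex.cos z]

/-- Exact evolution matrix of the kinetic part. -/
def MT (z : ℂ) : Matrix (Fin 2) (Fin 2) ℂ := !![1, z; 0, 1]

/-- Exact evolution matrix of the potential part. -/
def MV (z : ℂ) : Matrix (Fin 2) (Fin 2) ℂ := !![1, 0; -z, 1]

/-- The leapfrog/Strang splitting matrix. -/
noncomputable def L (z : ℂ) : Matrix (Fin 2) (Fin 2) ℂ := MT (z / 2) * MV z * MT (z / 2)

/-- The coefficient `α = 1/2 + (√3/6) i`. -/
noncomputable def αc : ℂ := 1 / 2 + (Real.sqrt 3 / 6 : ℝ) * Complex.I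

/-! `L z = !![1 - z²/2, z - z³/4; -z, 1 - z²/2]`, so the coefficients of `L (a z) * L (b z)` up
to `z³` depend only on `a + b` and `a b`. When `a + b = 1` and `a b = 1/3` (the case of `α` and
`ᾱ`, the roots of `3 X² - 3 X + 1`) they coincide with those of the Taylor expansion of `MH z`,
and the error is `z⁴` times a polynomial plus the Taylor remainders of `cos` and `sin`. -/

open Topology ComplexConjugate

lemma L_eq (z : ℂ) : L z = !![1 - z ^ 2 / 2, z - z ^ 3 / 4; -z, 1 - z ^ 2 / 2] := by
  ext i j
  fin_cases i <;> fin_cases j <;> simp [L, MT, MV, mul_apply, Fin.sum_univ_two] <;> ring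

noncomputable def taylorMH (z : ℂ) : Matrix (Fin 2) (Fin 2) ℂ :=
  !![1 - z ^ 2 / 2, z - z ^ 3 / 6; -(z - z ^ 3 / 6), 1 - z ^ 2 / 2]

lemma cos_sub_taylor_isBigO :
    (fun z : ℂ => Complex.cos z - (1 - z ^ 2 / 2)) =O[𝓝 0] (· ^ 4) := by
  refine IsBigO.of_bound (5 / 96) ?_
  filter_upwards [Metric.closedBall_mem_nhds (0 : ℂ) one_pos] with z hz
  rw [mem_closedBall_zero_iff] at hz
  calc ‖Complex.cos z - (1 - z ^ 2 / 2)‖ ≤ ‖z‖ ^ 4 * (5 / 96) := Complex.cos_bound hz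
    _ = 5 / 96 * ‖z ^ 4‖ := by rw [norm_pow, mul_comm]

lemma sin_sub_taylor_isBigO :
    (fun z : ℂ => Complex.sin z - (z - z ^ 3 / 6)) =O[𝓝 0] (· ^ 4) := by
  refine IsBigO.of_bound (1 / 100) ?_
  filter_upwards [Metric.closedBall_mem_nhds (0 : ℂ) one_pos] with z hz
  rw [mem_closedBall_zero_iff] at hz
  calc ‖Complex.sin z - (z - z ^ 3 / 6)‖ ≤ ‖z‖ ^ 5 / 100 := Complex.sin_bound hz
    _ ≤ ‖z‖ ^ 4 / 100 := by
      gcongr ?_ / _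
      exact pow_le_pow_of_le_one (norm_nonneg z) hz (by norm_num)
    _ = 1 / 100 * ‖z ^ 4‖ := by rw [norm_pow]; ring

lemma MH_sub_taylorMH_isBigO : (fun z : ℂ => MH z - taylorMH z) =O[𝓝 0] (· ^ 4) := by
  refine isBigO_pi.2 fun i => isBigO_pi.2 fun j => ?_
  fin_cases i <;> fin_cases j
  · exact cos_sub_taylor_isBigO
  · exact sin_sub_taylor_isBigO
  · refine sin_sub_taylor_isBigO.neg_left.congr_left fun z => ?_
    simp [MH, taylorMH]
    ring
  · exact cos_sub_taylor_isBigO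

noncomputable def compositionRemainder (a b z : ℂ) : Matrix (Fin 2) (Fin 2) ℂ :=
  !![a ^ 2 * b ^ 2 / 4 + a ^ 3 * b / 4, a ^ 2 * b ^ 2 * z / 8; 0, a * b ^ 3 / 4 + a ^ 2 * b ^ 2 / 4]

lemma continuous_compositionRemainder (a b : ℂ) : Continuous (compositionRemainder a b) := by
  refine continuous_matrix fun i j => ?_
  fin_cases i <;> fin_cases j <;> simp [compositionRemainder] <;> fun_prop

lemma L_mul_L_sub_taylorMH {a b : ℂ} (hsum : a + b = 1) (hprod : a * b = 1 / 3) (z : ℂ) :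
    L (a * z) * L (b * z) - taylorMH z = z ^ 4 • compositionRemainder a b z := by
  ext i j
  fin_cases i <;> fin_cases j <;> simp [L_eq, taylorMH, compositionRemainder]
  · linear_combination (-(z ^ 2 / 2) * (a + b + 1)) * hsum
  · linear_combination (z - z ^ 3 * ((a + b) ^ 2 + (a + b) + 1) / 4 + z ^ 3 * (a * b) / 4
      + (a * b) ^ 2 * z ^ 5 / 8) * hsum + z ^ 3 / 4 * hprod
  · linear_combination (-z + z ^ 3 * (a * b) / 2) * hsum + z ^ 3 / 2 * hprod
  · linear_combination (-(z ^ 2 / 2) * (a + b + 1)) * hsum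

lemma L_mul_L_sub_MH_isBigO {a b : ℂ} (hsum : a + b = 1) (hprod : a * b = 1 / 3) :
    (fun z : ℂ => L (a * z) * L (b * z) - MH z) =O[𝓝 0] (· ^ 4) := by
  have hsplit (z : ℂ) : L (a * z) * L (b * z) - MH z =
      (L (a * z) * L (b * z) - taylorMH z) - (MH z - taylorMH z) := by abel
  simp_rw [hsplit, L_mul_L_sub_taylorMH hsum hprod]
  refine IsBigO.sub ?_ MH_sub_taylorMH_isBigO
  have hbounded := ((continuous_compositionRemainder a b).tendsto 0).isBigO_one ℂ
  exact ((isBigO_refl (· ^ 4) (𝓝 (0 : ℂ))).smul hbounded).congr_right fun z => by simp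

lemma αc_add_conj : αc + conj αc = 1 := by
  rw [Complex.add_conj]; simp [αc]

lemma αc_mul_conj : αc * conj αc = 1 / 3 := by
  have h : αc = ((1 / 2 : ℝ) : ℂ) + ((Real.sqrt 3 / 6 : ℝ) : ℂ) * Complex.I := by simp [αc]
  have hnorm : (1 / 2 : ℝ) ^ 2 + (Real.sqrt 3 / 6) ^ 2 = 1 / 3 := by
    rw [div_pow (Real.sqrt 3), Real.sq_sqrt (by norm_num)]; norm_num
  rw [Complex.mul_conj, h, Complex.normSq_add_mul_I, hnorm]
  norm_num

theorem two_stage_symmetric_conjugate_order_three :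
    (fun h : ℝ => L (αc * (h : ℂ)) * L (starRingEnd ℂ αc * (h : ℂ)) - MH (h : ℂ))
      =O[nhds 0] fun h : ℝ => h ^ 4 := by
  have hℂ := (L_mul_L_sub_MH_isBigO αc_add_conj αc_mul_conj).comp_tendsto
    (Complex.continuous_ofReal.tendsto' 0 0 Complex.ofReal_zero)
  exact hℂ.trans (isBigO_of_le _ fun h => by simp)
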